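/- arXiv:2510.01515 — 5 statements merged into one kernel-verified Lean document; each statement's English description precedes it below -/
import Mathlib

section
/- Let f : ℝ^m → [0, ∞) be convex, positively 1-homogeneous, and satisfy c|ξ| ≤ f(ξ) ≤ C|ξ| for all ξ with constants 0 < c ≤ C. Define the polar f⋆(ξ*) := sup{⟨ξ*, ξ⟩ : f(ξ) ≤ 1}. Then for every t > 0, sup{ f⋆(ξ₁* + ξ₂*) + t f⋆(ξ₁* − ξ₂*) : f⋆(ξ₁*) ≤ 1, f⋆(ξ₂*) ≤ 1 } = sup{ f(ξ₁ + tξ₂) + f(ξ₁ − tξ₂) : f(ξ₁) ≤ 1, f(ξ₂) ≤ 1 }. -/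
/-!
For `f⋆ a, f⋆ b ≤ 1` and `f x, f y ≤ 1` one has the identity
`⟪a + b, x⟫ + t ⟪a - b, y⟫ = ⟪a, x + t y⟫ + ⟪b, x - t y⟫`, and `⟪a, z⟫ ≤ f z` by homogeneity.
Taking the supremum over `x, y` bounds the left-hand side of the theorem by the right-hand one.
Conversely, `f` is sublinear, so by Hahn–Banach every `z` has a linear functional `a ≤ f` with
`⟪a, z⟫ = f z`, hence `f⋆ a ≤ 1`; choosing such `a, b` at `z = x ± t y` reads the identity
backwards.
-/

open RealInnerProductSpace Bornology

section Sublinear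

variable {E : Type*} [AddCommGroup E] [Module ℝ E] {N : E → ℝ}

lemma map_zero_of_homogeneous (hhom : ∀ s : ℝ, 0 < s → ∀ x, N (s • x) = s * N x) : N 0 = 0 := by
  grind [hhom 2 two_pos 0, smul_zero]

lemma ConvexOn.map_add_le_of_homogeneous (hconv : ConvexOn ℝ Set.univ N)
    (hhom : ∀ s : ℝ, 0 < s → ∀ x, N (s • x) = s * N x) (x y : E) :
    N (x + y) ≤ N x + N y := by
  have hmid := hconv.2 (Set.mem_univ x) (Set.mem_univ y) one_half_pos.le one_half_pos.le
    (add_halves 1)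
  have hxy : x + y = (2 : ℝ) • ((1 / 2 : ℝ) • x + (1 / 2 : ℝ) • y) := by
    rw [smul_add, smul_smul, smul_smul]; norm_num
  rw [hxy, hhom 2 two_pos]
  simp only [smul_eq_mul] at hmid
  linarith

lemma mul_le_map_smul_of_sublinear (hhom : ∀ s : ℝ, 0 < s → ∀ x, N (s • x) = s * N x)
    (hadd : ∀ x y, N (x + y) ≤ N x + N y) (s : ℝ) (x : E) : s * N x ≤ N (s • x) := by
  have h0 := map_zero_of_homogeneous hhom
  rcases lt_trichotomy s 0 with hs | rfl | hs
  · have := hadd (s • x) ((-s) • x)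
    rw [← add_smul, add_neg_cancel, zero_smul, h0, hhom _ (neg_pos.2 hs)] at this
    linarith
  · simp [h0]
  · exact (hhom s hs x).ge

theorem exists_linearMap_le_eq_of_sublinear (hhom : ∀ s : ℝ, 0 < s → ∀ x, N (s • x) = s * N x)
    (hadd : ∀ x y, N (x + y) ≤ N x + N y) (z : E) :
    ∃ g : E →ₗ[ℝ] ℝ, (∀ x, g x ≤ N x) ∧ g z = N z := by
  have h0 := map_zero_of_homogeneous hhom
  let g₀ : E →ₗ.[ℝ] ℝ := LinearPMap.mkSpanSingleton' z (N z) fun s hs => by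
    rcases smul_eq_zero.1 hs with rfl | rfl
    · exact zero_smul ℝ _
    · rw [h0, smul_zero]
  obtain ⟨g, hg, hle⟩ := exists_extension_of_le_sublinear g₀ N hhom hadd <| by
    rintro ⟨_, hx⟩
    obtain ⟨s, rfl⟩ := Submodule.mem_span_singleton.1 hx
    exact (LinearPMap.mkSpanSingleton'_apply _ _ _ s hx).trans_le
      (mul_le_map_smul_of_sublinear hhom hadd s z)
  refine ⟨g, hle, ?_⟩
  have hz : z ∈ g₀.domain := Submodule.mem_span_singleton_self z
  exact (hg ⟨z, hz⟩).trans (LinearPMap.mkSpanSingleton'_apply_self _ _ _ hz)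

end Sublinear

section PolarGauge

variable {E : Type*} [NormedAddCommGroup E] {f : E → ℝ}

lemma isBounded_setOf_le_of_mul_norm_le {c : ℝ} (hc : 0 < c) (hlow : ∀ x, c * ‖x‖ ≤ f x)
    (r : ℝ) : IsBounded {x | f x ≤ r} :=
  isBounded_iff_forall_norm_le.2 ⟨r / c, fun x hx => by
    rw [le_div_iff₀ hc, mul_comm]; exact (hlow x).trans hx⟩

variable [InnerProductSpace ℝ E]

noncomputable def polarGauge (f : E → ℝ) (w : E) : ℝ :=
  sSup ((fun x => ⟪w, x⟫) '' {x | f x ≤ 1})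

lemma bddAbove_inner_image (hK : IsBounded {x | f x ≤ 1}) (w : E) :
    BddAbove ((fun x => ⟪w, x⟫) '' {x | f x ≤ 1}) :=
  ((innerSL ℝ w).lipschitz.isBounded_image hK).bddAbove

lemma inner_le_polarGauge (hK : IsBounded {x | f x ≤ 1}) (w : E) {x : E} (hx : f x ≤ 1) :
    ⟪w, x⟫ ≤ polarGauge f w :=
  le_csSup (bddAbove_inner_image hK w) ⟨x, hx, rfl⟩

lemma polarGauge_le_iff (hK : IsBounded {x | f x ≤ 1}) (h0 : f 0 ≤ 1) {w : E} {r : ℝ} :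
    polarGauge f w ≤ r ↔ ∀ x, f x ≤ 1 → ⟪w, x⟫ ≤ r := by
  rw [polarGauge, csSup_le_iff (bddAbove_inner_image hK w) ⟨_, 0, h0, rfl⟩,
    Set.forall_mem_image]
  rfl

lemma inner_le_of_polarGauge_le_one (hhom : ∀ s : ℝ, 0 < s → ∀ x, f (s • x) = s * f x)
    (hpos : ∀ z, z ≠ 0 → 0 < f z) (hK : IsBounded {x | f x ≤ 1}) {a : E}
    (ha : polarGauge f a ≤ 1) (z : E) : ⟪a, z⟫ ≤ f z := by
  rcases eq_or_ne z 0 with rfl | hz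
  · simp [map_zero_of_homogeneous hhom]
  have hfz := hpos z hz
  have hunit : f ((f z)⁻¹ • z) ≤ 1 := by rw [hhom _ (inv_pos.2 hfz), inv_mul_cancel₀ hfz.ne']
  have h := (inner_le_polarGauge hK a hunit).trans ha
  rwa [real_inner_smul_right, inv_mul_le_iff₀ hfz, mul_one] at h

theorem exists_polarGauge_le_one_inner_eq [FiniteDimensional ℝ E] (hconv : ConvexOn ℝ Set.univ f)
    (hhom : ∀ s : ℝ, 0 < s → ∀ x, f (s • x) = s * f x) (hK : IsBounded {x | f x ≤ 1}) (z : E) :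
    ∃ a, polarGauge f a ≤ 1 ∧ ⟪a, z⟫ = f z := by
  obtain ⟨g, hle, hgz⟩ := exists_linearMap_le_eq_of_sublinear hhom
    (hconv.map_add_le_of_homogeneous hhom) z
  have hinner : ∀ x,
      ⟪(InnerProductSpace.toDual ℝ E).symm (LinearMap.toContinuousLinearMap g), x⟫ = g x :=
    fun _ => InnerProductSpace.toDual_symm_apply
  refine ⟨_, ?_, (hinner z).trans hgz⟩
  rw [polarGauge_le_iff hK ((map_zero_of_homogeneous hhom).trans_le zero_le_one)]
  exact fun x hx => (hinner x).trans_le ((hle x).trans hx)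

lemma inner_add_add_mul_inner_sub (a b x y : E) (t : ℝ) :
    ⟪a + b, x⟫ + t * ⟪a - b, y⟫ = ⟪a, x + t • y⟫ + ⟪b, x - t • y⟫ := by
  simp only [inner_add_left, inner_sub_left, inner_add_right, inner_sub_right,
    real_inner_smul_right]
  ring

lemma polarGauge_add_add_mul_polarGauge_sub_le
    (hhom : ∀ s : ℝ, 0 < s → ∀ x, f (s • x) = s * f x) (hpos : ∀ z, z ≠ 0 → 0 < f z)
    (hK : IsBounded {x | f x ≤ 1}) {a b : E} (ha : polarGauge f a ≤ 1) (hb : polarGauge f b ≤ 1)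
    {t M : ℝ} (ht : 0 < t)
    (hM : ∀ x y, f x ≤ 1 → f y ≤ 1 → f (x + t • y) + f (x - t • y) ≤ M) :
    polarGauge f (a + b) + t * polarGauge f (a - b) ≤ M := by
  have h0 : f 0 ≤ 1 := (map_zero_of_homogeneous hhom).trans_le zero_le_one
  have hpair : ∀ x y, f x ≤ 1 → f y ≤ 1 → ⟪a + b, x⟫ + t * ⟪a - b, y⟫ ≤ M := fun x y hx hy => by
    rw [inner_add_add_mul_inner_sub]
    exact (add_le_add (inner_le_of_polarGauge_le_one hhom hpos hK ha _)
      (inner_le_of_polarGauge_le_one hhom hpos hK hb _)).trans (hM x y hx hy)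
  suffices polarGauge f (a - b) ≤ (M - polarGauge f (a + b)) / t by
    rw [le_div_iff₀ ht] at this; linarith
  refine (polarGauge_le_iff hK h0).2 fun y hy => ?_
  have : polarGauge f (a + b) ≤ M - t * ⟪a - b, y⟫ :=
    (polarGauge_le_iff hK h0).2 fun x hx => by linarith [hpair x y hx hy]
  rw [le_div_iff₀ ht]; linarith

lemma add_le_polarGauge_add_add_mul_polarGauge_sub (hK : IsBounded {x | f x ≤ 1}) {a b x y : E}
    {t : ℝ} (ht : 0 ≤ t) (hx : f x ≤ 1) (hy : f y ≤ 1) (ha : ⟪a, x + t • y⟫ = f (x + t • y))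
    (hb : ⟪b, x - t • y⟫ = f (x - t • y)) :
    f (x + t • y) + f (x - t • y) ≤ polarGauge f (a + b) + t * polarGauge f (a - b) := by
  rw [← ha, ← hb, ← inner_add_add_mul_inner_sub]
  gcongr
  · exact inner_le_polarGauge hK _ hx
  · exact inner_le_polarGauge hK _ hy

lemma map_add_smul_le_of_le_one {c C : ℝ} (hc : 0 < c) (hC : 0 ≤ C)
    (hbd : ∀ ξ, c * ‖ξ‖ ≤ f ξ ∧ f ξ ≤ C * ‖ξ‖) {x y : E} (hx : f x ≤ 1) (hy : f y ≤ 1) (s : ℝ) :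
    f (x + s • y) ≤ C * ((1 + |s|) / c) := by
  have hnorm : ∀ {v}, f v ≤ 1 → ‖v‖ ≤ 1 / c := fun hv => by
    rw [le_div_iff₀ hc, mul_comm]; exact (hbd _).1.trans hv
  calc f (x + s • y) ≤ C * ‖x + s • y‖ := (hbd _).2
    _ ≤ C * (‖x‖ + |s| * ‖y‖) := by
      gcongr; exact (norm_add_le _ _).trans_eq (by rw [norm_smul, Real.norm_eq_abs])
    _ ≤ C * (1 / c + |s| * (1 / c)) := by gcongr <;> exact hnorm ‹_›
    _ = C * ((1 + |s|) / c) := by ring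

end PolarGauge

/-- Duality between the modulus of smoothness of a gauge `f` comparable to the Euclidean norm and
the modulus of convexity of its polar `f⋆`: for every `t > 0`,
`sup{f⋆(ξ₁*+ξ₂*) + t f⋆(ξ₁*−ξ₂*) : f⋆(ξᵢ*) ≤ 1} = sup{f(ξ₁+tξ₂) + f(ξ₁−tξ₂) : f(ξᵢ) ≤ 1}`. -/
theorem polar_smoothness_convexity_duality {m : ℕ} (f : EuclideanSpace ℝ (Fin m) → ℝ)
    (c C : ℝ) (hc : 0 < c) (hcC : c ≤ C)
    (hconv : ConvexOn ℝ Set.univ f)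
    (hhom : ∀ s : ℝ, 0 < s → ∀ ξ, f (s • ξ) = s * f ξ)
    (hbd : ∀ ξ, c * ‖ξ‖ ≤ f ξ ∧ f ξ ≤ C * ‖ξ‖)
    (fstar : EuclideanSpace ℝ (Fin m) → ℝ)
    (hfstar : ∀ w, fstar w = sSup ((fun x => ⟪w, x⟫) '' {x | f x ≤ 1}))
    (t : ℝ) (ht : 0 < t) :
    sSup {r : ℝ | ∃ a b, fstar a ≤ 1 ∧ fstar b ≤ 1 ∧ r = fstar (a + b) + t * fstar (a - b)} =
    sSup {r : ℝ | ∃ x y, f x ≤ 1 ∧ f y ≤ 1 ∧ r = f (x + t • y) + f (x - t • y)} := by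
  obtain rfl : fstar = polarGauge f := funext hfstar
  have hK := isBounded_setOf_le_of_mul_norm_le hc (fun ξ => (hbd ξ).1) 1
  have hpos : ∀ z, z ≠ 0 → 0 < f z := fun z hz =>
    (mul_pos hc (norm_pos_iff.2 hz)).trans_le (hbd z).1
  have h0 : f 0 ≤ 1 := (map_zero_of_homogeneous hhom).trans_le zero_le_one
  have hstar0 : polarGauge f 0 ≤ 1 := (polarGauge_le_iff hK h0).2 fun x _ => by simp
  set S₁ := {r : ℝ | ∃ a b, polarGauge f a ≤ 1 ∧ polarGauge f b ≤ 1 ∧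
    r = polarGauge f (a + b) + t * polarGauge f (a - b)}
  set S₂ := {r : ℝ | ∃ x y, f x ≤ 1 ∧ f y ≤ 1 ∧ r = f (x + t • y) + f (x - t • y)}
  have hS₂ : BddAbove S₂ := ⟨2 * (C * ((1 + t) / c)), by
    rintro _ ⟨x, y, hx, hy, rfl⟩
    have hplus := map_add_smul_le_of_le_one hc (hc.le.trans hcC) hbd hx hy t
    have hminus := map_add_smul_le_of_le_one hc (hc.le.trans hcC) hbd hx hy (-t)
    rw [neg_smul, ← sub_eq_add_neg, abs_neg] at hminus
    rw [abs_of_pos ht] at hplus hminus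
    linarith⟩
  have hS₁ : ∀ r ∈ S₁, r ≤ sSup S₂ := by
    rintro _ ⟨a, b, ha, hb, rfl⟩
    exact polarGauge_add_add_mul_polarGauge_sub_le hhom hpos hK ha hb ht
      fun x y hx hy => le_csSup hS₂ ⟨x, y, hx, hy, rfl⟩
  refine le_antisymm (csSup_le ⟨_, 0, 0, hstar0, hstar0, rfl⟩ hS₁) <|
    csSup_le ⟨_, 0, 0, h0, h0, rfl⟩ ?_
  rintro _ ⟨x, y, hx, hy, rfl⟩
  obtain ⟨a, ha, hax⟩ := exists_polarGauge_le_one_inner_eq hconv hhom hK (x + t • y)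
  obtain ⟨b, hb, hbx⟩ := exists_polarGauge_le_one_inner_eq hconv hhom hK (x - t • y)
  exact (add_le_polarGauge_add_add_mul_polarGauge_sub hK ht.le hx hy hax hbx).trans
    (le_csSup ⟨_, hS₁⟩ ⟨a, b, ha, hb, rfl⟩)
end

section
/- Let N be a norm on ℝ^m with dual norm N*, and suppose there is c > 0 such that N*((a + b)/2) ≤ 1 − c·N*(a − b)² whenever N*(a) ≤ 1 and N*(b) ≤ 1 (2-uniform convexity of the dual unit ball). Suppose N is differentiable at v ≠ 0. Then for every v* with N*(v*) ≤ 1 one has ⟨DN(v) − v*, v⟩ ≥ 2c · N(v) · N*(DN(v) − v*)². In particular, since N and N* are each comparable to the Euclidean norm, there is a constant c' > 0 such that for all unit vectors v and all v* in the dual unit ball, ⟨DN(v) − v*, v⟩ ≥ c' |DN(v) − v*|². -/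
open RealInnerProductSpace

/-! The derivative `g` of a norm at `v` satisfies `⟪g, ·⟫ ≤ N` and `⟪g, v⟫ = N v`, i.e. `N* g ≤ 1`
and `g` norms `v`. Averaging `g` with any `v*` in the dual unit ball and testing the midpoint against
`v`, the uniform convexity of the dual ball gives
`(N v + ⟪v*, v⟫) / 2 ≤ N* ((g + v*) / 2) N v ≤ (1 - c N* (g - v*)²) N v`,
which rearranges to `2 c N v N* (g - v*)² ≤ ⟪g - v*, v⟫`. The Euclidean version follows since in
finite dimension `N` and `N*` are comparable to `‖·‖`. -/

section Gradient

variable {E : Type*} [NormedAddCommGroup E] [NormedSpace ℝ E]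

theorem ConvexOn.le_sub_of_hasFDerivAt {φ : E → ℝ} (hφ : ConvexOn ℝ Set.univ φ)
    {f : E →L[ℝ] ℝ} {v : E} (hf : HasFDerivAt φ f v) (x : E) : f x ≤ φ (v + x) - φ v := by
  have hconvex : ConvexOn ℝ Set.univ fun t : ℝ => φ (v + t • x) :=
    (hφ.translate_right v).comp_linearMap (LinearMap.toSpanSingleton ℝ E x)
  have hderiv : HasDerivAt (fun t : ℝ => φ (v + t • x)) (f x) 0 := by
    have hray : HasDerivAt (fun t : ℝ => v + t • x) x 0 := by
      simpa using ((hasDerivAt_id (0 : ℝ)).smul_const x).const_add v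
    have hf0 : HasFDerivAt φ f (v + (0 : ℝ) • x) := by simpa using hf
    exact hf0.comp_hasDerivAt 0 hray
  simpa [slope_def_field] using
    hconvex.le_slope_of_hasDerivAt (Set.mem_univ 0) (Set.mem_univ 1) one_pos hderiv

namespace Seminorm

variable (p : Seminorm ℝ E) {f : E →L[ℝ] ℝ} {v : E}

theorem apply_le_of_hasFDerivAt (hf : HasFDerivAt p f v) (x : E) : f x ≤ p x := by
  linarith [p.convexOn.le_sub_of_hasFDerivAt hf x, map_add_le_add p v x]

theorem apply_self_of_hasFDerivAt (hf : HasFDerivAt p f v) : f v = p v := by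
  have hle := p.convexOn.le_sub_of_hasFDerivAt hf v
  have hge := p.convexOn.le_sub_of_hasFDerivAt hf (-v)
  rw [← two_smul ℝ v, map_smul_eq_mul] at hle
  rw [add_neg_cancel, map_zero, map_neg] at hge
  norm_num at hle
  linarith

end Seminorm

end Gradient

section FiniteDimensional

variable {E : Type*} [NormedAddCommGroup E] [NormedSpace ℝ E] [FiniteDimensional ℝ E]
  (p : Seminorm ℝ E)

namespace Seminorm

theorem continuous_of_finiteDimensional : Continuous p :=
  p.convexOn.locallyLipschitz.continuous

theorem exists_pos_mul_norm_le (hp : ∀ x, p x = 0 → x = 0) :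
    ∃ ε > 0, ∀ x, ε * ‖x‖ ≤ p x := by
  have hpos : ∀ x ∈ Metric.sphere (0 : E) 1, 0 < p x := fun x hx =>
    (apply_nonneg p x).lt_of_ne' fun h => by simp [hp x h] at hx
  obtain ⟨ε, hε, hεp⟩ := (isCompact_sphere (0 : E) 1).exists_forall_le'
    p.continuous_of_finiteDimensional.continuousOn hpos
  refine ⟨ε, hε, fun x => ?_⟩
  rcases eq_or_ne x 0 with rfl | hx
  · simp
  have hx' : 0 < ‖x‖ := norm_pos_iff.mpr hx
  have := hεp (‖x‖⁻¹ • x) (by simp [norm_smul, hx'.ne'])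
  rw [map_smul_eq_mul, norm_inv, norm_norm] at this
  rwa [le_inv_mul_iff₀ hx', mul_comm] at this

end Seminorm

end FiniteDimensional

namespace Seminorm

variable {E : Type*} [NormedAddCommGroup E] [InnerProductSpace ℝ E] (p : Seminorm ℝ E)

/-- Meaningful only when `p` dominates a multiple of `‖·‖`: otherwise the set may be unbounded and
`sSup` returns the junk value `0`. -/
noncomputable def dualNorm (w : E) : ℝ := sSup ((fun x => ⟪w, x⟫) '' {x | p x ≤ 1})

theorem dualNorm_le_one_of_inner_le {w : E} (h : ∀ x, ⟪w, x⟫ ≤ p x) : p.dualNorm w ≤ 1 :=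
  Real.sSup_le (by rintro _ ⟨x, hx, rfl⟩; exact (h x).trans hx) zero_le_one

variable {p} {ε : ℝ} (hε : 0 < ε) (hpε : ∀ x, ε * ‖x‖ ≤ p x)
include hε hpε

theorem bddAbove_inner_unitBall (w : E) : BddAbove ((fun x => ⟪w, x⟫) '' {x | p x ≤ 1}) := by
  refine ⟨‖w‖ / ε, ?_⟩
  rintro _ ⟨x, hx, rfl⟩
  have : ‖x‖ ≤ 1 / ε := by rw [le_div_iff₀' hε]; exact (hpε x).trans hx
  calc ⟪w, x⟫ ≤ ‖w‖ * ‖x‖ := real_inner_le_norm w x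
    _ ≤ ‖w‖ * (1 / ε) := by gcongr
    _ = ‖w‖ / ε := by ring

theorem inner_le_dualNorm_of_apply_le_one {w x : E} (hx : p x ≤ 1) : ⟪w, x⟫ ≤ p.dualNorm w :=
  le_csSup (bddAbove_inner_unitBall hε hpε w) ⟨x, hx, rfl⟩

theorem dualNorm_nonneg (w : E) : 0 ≤ p.dualNorm w := by
  simpa using inner_le_dualNorm_of_apply_le_one hε hpε (w := w) (x := 0) (by simp)

theorem inner_le_dualNorm_mul (w x : E) : ⟪w, x⟫ ≤ p.dualNorm w * p x := by
  rcases (apply_nonneg p x).eq_or_lt with hx | hx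
  · have : x = 0 := norm_eq_zero.mp <| by nlinarith [hpε x, norm_nonneg x]
    simp [this]
  have := inner_le_dualNorm_of_apply_le_one hε hpε (w := w) (x := (p x)⁻¹ • x)
    (by rw [map_smul_eq_mul, norm_inv, Real.norm_of_nonneg hx.le, inv_mul_cancel₀ hx.ne'])
  rwa [real_inner_smul_right, inv_mul_le_iff₀ hx, mul_comm] at this

theorem norm_le_mul_dualNorm {K : ℝ} (hK : 0 ≤ K) (hpK : ∀ x, p x ≤ K * ‖x‖) (w : E) :
    ‖w‖ ≤ K * p.dualNorm w := by
  have hww : ‖w‖ * ‖w‖ ≤ ‖w‖ * (K * p.dualNorm w) :=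
    calc ‖w‖ * ‖w‖ = ⟪w, w⟫ := (real_inner_self_eq_norm_mul_norm w).symm
      _ ≤ p.dualNorm w * p w := inner_le_dualNorm_mul hε hpε w w
      _ ≤ p.dualNorm w * (K * ‖w‖) :=
        mul_le_mul_of_nonneg_left (hpK w) (dualNorm_nonneg hε hpε w)
      _ = ‖w‖ * (K * p.dualNorm w) := by ring
  rcases (norm_nonneg w).eq_or_lt with hw | hw
  · rw [← hw]; exact mul_nonneg hK (dualNorm_nonneg hε hpε w)
  · exact le_of_mul_le_mul_left hww hw

theorem two_mul_mul_dualNorm_sq_le_inner [CompleteSpace E] {c : ℝ}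
    (huc : ∀ a b, p.dualNorm a ≤ 1 → p.dualNorm b ≤ 1 →
      p.dualNorm ((1 / 2 : ℝ) • (a + b)) ≤ 1 - c * p.dualNorm (a - b) ^ 2)
    {v g : E} (hg : HasGradientAt p g v) {vs : E} (hvs : p.dualNorm vs ≤ 1) :
    2 * c * p v * p.dualNorm (g - vs) ^ 2 ≤ ⟪g - vs, v⟫ := by
  have hg_dual : p.dualNorm g ≤ 1 :=
    p.dualNorm_le_one_of_inner_le (p.apply_le_of_hasFDerivAt hg.hasFDerivAt)
  have hg_norming : ⟪g, v⟫ = p v := p.apply_self_of_hasFDerivAt hg.hasFDerivAt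
  have hmid : ⟪(1 / 2 : ℝ) • (g + vs), v⟫ ≤ (1 - c * p.dualNorm (g - vs) ^ 2) * p v :=
    (inner_le_dualNorm_mul hε hpε _ v).trans
      (mul_le_mul_of_nonneg_right (huc g vs hg_dual hvs) (apply_nonneg p v))
  rw [real_inner_smul_left, inner_add_left] at hmid
  rw [inner_sub_left]
  linarith

end Seminorm

theorem quantitative_fenchel_general {m : ℕ} (N : EuclideanSpace ℝ (Fin m) → ℝ)
    (haddle : ∀ x y, N (x + y) ≤ N x + N y)
    (hsmul : ∀ (c : ℝ) x, N (c • x) = |c| * N x)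
    (hzero : ∀ x, N x = 0 ↔ x = 0)
    (Nstar : EuclideanSpace ℝ (Fin m) → ℝ)
    (hNstar : ∀ w, Nstar w = sSup ((fun x => ⟪w, x⟫) '' {x | N x ≤ 1}))
    (c : ℝ) (hc : 0 < c)
    (huc : ∀ a b, Nstar a ≤ 1 → Nstar b ≤ 1 →
      Nstar ((1 / 2 : ℝ) • (a + b)) ≤ 1 - c * (Nstar (a - b)) ^ 2)
    (v g : EuclideanSpace ℝ (Fin m))
    (hg : HasGradientAt N g v) :
    (∀ vs, Nstar vs ≤ 1 → 2 * c * N v * (Nstar (g - vs)) ^ 2 ≤ ⟪g - vs, v⟫) ∧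
    (∃ c' : ℝ, 0 < c' ∧ ∀ (w g' : EuclideanSpace ℝ (Fin m)), ‖w‖ = 1 →
      HasGradientAt N g' w → ∀ vs, Nstar vs ≤ 1 →
        c' * ‖g' - vs‖ ^ 2 ≤ ⟪g' - vs, w⟫) := by
  let p : Seminorm ℝ (EuclideanSpace ℝ (Fin m)) :=
    Seminorm.of N haddle fun a x => by rw [hsmul, Real.norm_eq_abs]
  obtain rfl : Nstar = p.dualNorm := funext hNstar
  obtain ⟨ε, hε, hpε⟩ := p.exists_pos_mul_norm_le fun x => (hzero x).mp
  obtain ⟨K, hK, hpK⟩ := p.bound_of_continuous_normedSpace p.continuous_of_finiteDimensional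
  refine ⟨fun vs => Seminorm.two_mul_mul_dualNorm_sq_le_inner hε hpε huc hg,
    2 * c * ε / K ^ 2, by positivity, fun w g' hw hg' vs hvs => ?_⟩
  have hpw : ε ≤ p w := by simpa [hw] using hpε w
  have hdual : ‖g' - vs‖ ^ 2 / K ^ 2 ≤ p.dualNorm (g' - vs) ^ 2 := by
    rw [div_le_iff₀ (by positivity), ← mul_pow, mul_comm]
    exact pow_le_pow_left₀ (norm_nonneg _) (p.norm_le_mul_dualNorm hε hpε hK.le hpK _) 2
  calc 2 * c * ε / K ^ 2 * ‖g' - vs‖ ^ 2 = 2 * c * ε * (‖g' - vs‖ ^ 2 / K ^ 2) := by ring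
    _ ≤ 2 * c * p w * p.dualNorm (g' - vs) ^ 2 := by gcongr
    _ ≤ ⟪g' - vs, w⟫ := Seminorm.two_mul_mul_dualNorm_sq_le_inner hε hpε huc hg' hvs

/-- Quantitative Fenchel-type inequality: if the dual unit ball of a norm `N` is 2-uniformly
convex, and `N` is differentiable at `v ≠ 0`, then `⟨DN(v) − v*, v⟩ ≥ 2c N(v) N*(DN(v) − v*)²`
for every `v*` in the dual unit ball; in particular there is `c' > 0` with
`⟨DN(w) − v*, w⟩ ≥ c' |DN(w) − v*|²` for all unit vectors `w` and dual-unit-ball `v*`. -/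
theorem quantitative_fenchel {m : ℕ} (N : EuclideanSpace ℝ (Fin m) → ℝ)
    (haddle : ∀ x y, N (x + y) ≤ N x + N y)
    (hsmul : ∀ (c : ℝ) x, N (c • x) = |c| * N x)
    (hzero : ∀ x, N x = 0 ↔ x = 0)
    (Nstar : EuclideanSpace ℝ (Fin m) → ℝ)
    (hNstar : ∀ w, Nstar w = sSup ((fun x => ⟪w, x⟫) '' {x | N x ≤ 1}))
    (c : ℝ) (hc : 0 < c)
    (huc : ∀ a b, Nstar a ≤ 1 → Nstar b ≤ 1 →
      Nstar ((1 / 2 : ℝ) • (a + b)) ≤ 1 - c * (Nstar (a - b)) ^ 2)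
    (v g : EuclideanSpace ℝ (Fin m)) (hv : v ≠ 0)
    (hg : HasGradientAt N g v) :
    (∀ vs, Nstar vs ≤ 1 → 2 * c * N v * (Nstar (g - vs)) ^ 2 ≤ ⟪g - vs, v⟫) ∧
    (∃ c' : ℝ, 0 < c' ∧ ∀ (w g' : EuclideanSpace ℝ (Fin m)), ‖w‖ = 1 →
      HasGradientAt N g' w → ∀ vs, Nstar vs ≤ 1 →
        c' * ‖g' - vs‖ ^ 2 ≤ ⟪g' - vs, w⟫) :=
  quantitative_fenchel_general N haddle hsmul hzero Nstar hNstar c hc huc v g hg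
end

section
/- Let d ≥ 3, t ≥ 0, and define u(x) = t(d − 1)/|x| and z(x) = −x/|x| on ℝ^d \ {0}. Then |z(x)| = 1, div z(x) = −(d − 1)/|x|, and ⟨z(x), ∇u(x)⟩ = |∇u(x)| = t(d − 1)/|x|² for every x ≠ 0. In particular, with h̄(x) = (1 + t)(d − 1)/|x|, one has −div z(x) = h̄(x) − u(x)... i.e. div z = u − h̄. -/
/-!
The field `x ↦ x/‖x‖` has derivative `‖x‖⁻¹ (id - ‖x‖⁻² ⟪x, ·⟫ x)`, i.e. `‖x‖⁻¹` times the
orthogonal projection onto `x^⊥`, whose trace is `d - 1`; this gives `div z = -(d-1)/‖x‖`.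
The gradient of `u = c/‖x‖` is `-c x/‖x‖³ = (c/‖x‖²) z`, a nonnegative multiple of the unit
field `z` when `c = t(d-1) ≥ 0`, so `⟪z, ∇u⟫ = ‖∇u‖`.
-/

open RealInnerProductSpace

section InnerProductSpace

variable {F : Type*} [NormedAddCommGroup F] [InnerProductSpace ℝ F] {x : F}

theorem hasFDerivAt_norm_of_ne_zero (hx : x ≠ 0) :
    HasFDerivAt (‖·‖) (‖x‖⁻¹ • innerSL ℝ x) x := by
  have h := (hasStrictFDerivAt_norm_sq x).hasFDerivAt.sqrt (pow_ne_zero 2 (norm_ne_zero_iff.2 hx))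
  simp only [Real.sqrt_sq (norm_nonneg _)] at h
  convert h using 1
  ext v
  simp only [smul_apply, coe_innerSL_apply, smul_eq_mul, one_div, mul_inv_rev, nsmul_eq_mul,
    Nat.cast_ofNat]
  field_simp

theorem hasFDerivAt_norm_inv (hx : x ≠ 0) :
    HasFDerivAt (fun y : F => ‖y‖⁻¹) (-(‖x‖ ^ 3)⁻¹ • innerSL ℝ x) x := by
  refine ((hasDerivAt_inv (norm_ne_zero_iff.2 hx)).comp_hasFDerivAt x
    (hasFDerivAt_norm_of_ne_zero hx)).congr_fderiv ?_
  rw [smul_smul]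
  congr 1
  field_simp

theorem hasGradientAt_const_div_norm [CompleteSpace F] (c : ℝ) (hx : x ≠ 0) :
    HasGradientAt (fun y : F => c / ‖y‖) (-(c / ‖x‖ ^ 3) • x) x := by
  simp only [hasGradientAt_iff_hasFDerivAt, div_eq_mul_inv]
  refine ((hasFDerivAt_norm_inv hx).const_mul c).congr_fderiv ?_
  ext v
  simp only [neg_smul, neg_apply, smul_apply, coe_innerSL_apply, smul_eq_mul, map_neg, map_smul,
    InnerProductSpace.toDual_apply_apply]
  ring

theorem hasFDerivAt_norm_inv_smul (hx : x ≠ 0) :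
    HasFDerivAt (fun y : F => ‖y‖⁻¹ • y)
      (‖x‖⁻¹ • ContinuousLinearMap.id ℝ F + (-(‖x‖ ^ 3)⁻¹ • innerSL ℝ x).smulRight x) x :=
  (hasFDerivAt_norm_inv hx).smul (hasFDerivAt_id x)

end InnerProductSpace

section EuclideanSpace

variable {ι : Type*} [Fintype ι] [DecidableEq ι]

noncomputable def divergence (f : EuclideanSpace ℝ ι → EuclideanSpace ℝ ι)
    (x : EuclideanSpace ℝ ι) : ℝ :=
  ∑ i, fderiv ℝ f x (EuclideanSpace.single i 1) i

theorem divergence_neg (f : EuclideanSpace ℝ ι → EuclideanSpace ℝ ι) (x : EuclideanSpace ℝ ι) :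
    divergence (fun y => -f y) x = -divergence f x := by
  simp [divergence, Finset.sum_neg_distrib]

theorem divergence_norm_inv_smul {x : EuclideanSpace ℝ ι} (hx : x ≠ 0) :
    divergence (fun y => ‖y‖⁻¹ • y) x = (Fintype.card ι - 1) / ‖x‖ := by
  simp only [divergence, (hasFDerivAt_norm_inv_smul hx).fderiv, add_apply, smul_apply,
    ContinuousLinearMap.id_apply, ContinuousLinearMap.smulRight_apply, coe_innerSL_apply,
    EuclideanSpace.inner_single_right,
    Real.ringHom_apply, one_mul, smul_eq_mul, PiLp.add_apply, PiLp.smul_apply,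
    PiLp.single_eq_same, mul_one, mul_assoc, ← sq, Finset.sum_add_distrib, Finset.sum_const,
    Finset.card_univ, nsmul_eq_mul, ← Finset.mul_sum, ← EuclideanSpace.real_norm_sq_eq]
  field_simp
  ring

end EuclideanSpace

/-- Verification of the pointwise Euler–Lagrange conditions for the ROF counterexample:
for `d ≥ 3`, `t ≥ 0`, `u(x) = t(d−1)/|x|`, `z(x) = −x/|x|`, `h̄(x) = (1+t)(d−1)/|x|`, one has
`|z| = 1`, `div z = −(d−1)/|x|`, `⟨z, ∇u⟩ = |∇u| = t(d−1)/|x|²`, and `div z = u − h̄`. -/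
theorem rof_counterexample_conditions (d : ℕ) (hd : 3 ≤ d) (t : ℝ) (ht : 0 ≤ t)
    (x : EuclideanSpace ℝ (Fin d)) (hx : x ≠ 0) :
    let u : EuclideanSpace ℝ (Fin d) → ℝ := fun y => t * ((d : ℝ) - 1) / ‖y‖
    let z : EuclideanSpace ℝ (Fin d) → EuclideanSpace ℝ (Fin d) := fun y => -(‖y‖⁻¹ • y)
    let hbar : EuclideanSpace ℝ (Fin d) → ℝ := fun y => (1 + t) * ((d : ℝ) - 1) / ‖y‖
    ‖z x‖ = 1 ∧
    (∑ i, fderiv ℝ z x (EuclideanSpace.single i 1) i) = -(((d : ℝ) - 1) / ‖x‖) ∧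
    ⟪z x, gradient u x⟫ = ‖gradient u x‖ ∧
    ‖gradient u x‖ = t * ((d : ℝ) - 1) / ‖x‖ ^ 2 ∧
    (∑ i, fderiv ℝ z x (EuclideanSpace.single i 1) i) = u x - hbar x := by
  intro u z hbar
  have hc : 0 ≤ t * ((d : ℝ) - 1) :=
    mul_nonneg ht (sub_nonneg.2 (by exact_mod_cast (by omega : 1 ≤ d)))
  have hz : ‖z x‖ = 1 := (norm_neg _).trans (norm_smul_inv_norm (𝕜 := ℝ) hx)
  have hgrad : gradient u x = (t * ((d : ℝ) - 1) / ‖x‖ ^ 2) • z x := by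
    rw [(hasGradientAt_const_div_norm _ hx).gradient]
    simp only [z, smul_neg, neg_smul, smul_smul]
    field_simp
  have hdiv : divergence z x = -(((d : ℝ) - 1) / ‖x‖) := by
    rw [divergence_neg, divergence_norm_inv_smul hx, Fintype.card_fin]
  have hnorm : ‖gradient u x‖ = t * ((d : ℝ) - 1) / ‖x‖ ^ 2 := by
    rw [hgrad, norm_smul, hz, mul_one, Real.norm_of_nonneg (by positivity)]
  refine ⟨hz, hdiv, ?_, hnorm, hdiv.trans ?_⟩
  · rw [hnorm, hgrad, real_inner_smul_right, real_inner_self_eq_norm_sq, hz]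
    ring
  · simp only [u, hbar]
    ring
end

section
/- There exists a constant c > 0 (independent of dimensions) such that for all vectors a, b ∈ ℝ^n and all unit vectors v₁, v₂ ∈ ℝ^d, the rank-one matrices satisfy ‖a ⊗ v₁ − b ⊗ v₂‖ ≥ c · min(‖a‖, ‖b‖) · min(‖v₁ − v₂‖, ‖v₁ + v₂‖), where ‖·‖ on matrices is the Frobenius (Hilbert–Schmidt) norm. -/
/-!
The squared Frobenius norm of `a ⊗ v - b ⊗ w` is `‖a‖²‖v‖² - 2⟪a, b⟫⟪v, w⟫ + ‖b‖²‖w‖²`.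
For unit `v, w` with `t = ⟪v, w⟫`, Cauchy–Schwarz and AM–GM bound this below by
`‖a‖‖b‖ (2 - 2|t|) ≥ min(‖a‖, ‖b‖)² · min(‖v - w‖, ‖v + w‖)²`, since `‖v ∓ w‖² = 2 ∓ 2t`.
So `c = 1` works.
-/

open scoped RealInnerProductSpace

theorem EuclideanSpace.sum_sum_mul_sub_mul_sq {ι κ : Type*} [Fintype ι] [Fintype κ]
    (a b : EuclideanSpace ℝ ι) (v w : EuclideanSpace ℝ κ) :
    ∑ i, ∑ j, (a i * v j - b i * w j) ^ 2 =
      ‖a‖ ^ 2 * ‖v‖ ^ 2 - 2 * ⟪a, b⟫ * ⟪v, w⟫ + ‖b‖ ^ 2 * ‖w‖ ^ 2 := by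
  simp only [EuclideanSpace.real_norm_sq_eq, PiLp.inner_apply, RCLike.inner_apply, conj_trivial]
  rw [Finset.sum_mul_sum, Finset.sum_mul_sum, mul_assoc, Finset.sum_mul_sum]
  simp only [Finset.mul_sum, ← Finset.sum_sub_distrib, ← Finset.sum_add_distrib]
  exact Finset.sum_congr rfl fun i _ => Finset.sum_congr rfl fun j _ => by ring

section

variable {E : Type*} [NormedAddCommGroup E] [InnerProductSpace ℝ E]

theorem min_norm_sub_norm_add_sq_of_norm_eq_one {v w : E} (hv : ‖v‖ = 1) (hw : ‖w‖ = 1) :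
    min ‖v - w‖ ‖v + w‖ ^ 2 = 2 - 2 * |⟪v, w⟫| := by
  have hsub : ‖v - w‖ ^ 2 = 2 - 2 * ⟪v, w⟫ := by rw [norm_sub_sq_real, hv, hw]; ring
  have hadd : ‖v + w‖ ^ 2 = 2 + 2 * ⟪v, w⟫ := by rw [norm_add_sq_real, hv, hw]; ring
  have hsq {x y : ℝ} (hx : 0 ≤ x) (hy : 0 ≤ y) : x ≤ y ↔ x ^ 2 ≤ y ^ 2 :=
    (pow_le_pow_iff_left₀ hx hy two_ne_zero).symm
  rcases le_total 0 ⟪v, w⟫ with ht | ht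
  · rw [min_eq_left ((hsq (norm_nonneg _) (norm_nonneg _)).2 (by linarith)), hsub,
      abs_of_nonneg ht]
  · rw [min_eq_right ((hsq (norm_nonneg _) (norm_nonneg _)).2 (by linarith)), hadd,
      abs_of_nonpos ht]
    ring

theorem sq_min_norm_mul_min_norm_sub_norm_add_le {F : Type*} [NormedAddCommGroup F]
    [InnerProductSpace ℝ F] (a b : E) {v w : F} (hv : ‖v‖ = 1) (hw : ‖w‖ = 1) :
    (min ‖a‖ ‖b‖ * min ‖v - w‖ ‖v + w‖) ^ 2 ≤ ‖a‖ ^ 2 - 2 * ⟪a, b⟫ * ⟪v, w⟫ + ‖b‖ ^ 2 := by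
  have hs : |⟪a, b⟫| ≤ ‖a‖ * ‖b‖ := abs_real_inner_le_norm a b
  have ht : |⟪v, w⟫| ≤ 1 := by simpa [hv, hw] using abs_real_inner_le_norm v w
  have hmin : min ‖a‖ ‖b‖ ^ 2 ≤ ‖a‖ * ‖b‖ := by
    rw [sq]; exact mul_le_mul (min_le_left _ _) (min_le_right _ _) (by positivity) (by positivity)
  rw [mul_pow, min_norm_sub_norm_add_sq_of_norm_eq_one hv hw]
  calc min ‖a‖ ‖b‖ ^ 2 * (2 - 2 * |⟪v, w⟫|)
      ≤ ‖a‖ * ‖b‖ * (2 - 2 * |⟪v, w⟫|) := mul_le_mul_of_nonneg_right hmin (by linarith)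
    _ ≤ 2 * (‖a‖ * ‖b‖) - 2 * (|⟪a, b⟫| * |⟪v, w⟫|) := by
      nlinarith [mul_le_mul_of_nonneg_right hs (abs_nonneg ⟪v, w⟫)]
    _ ≤ ‖a‖ ^ 2 - 2 * ⟪a, b⟫ * ⟪v, w⟫ + ‖b‖ ^ 2 := by
      rw [← abs_mul]
      nlinarith [two_mul_le_add_sq ‖a‖ ‖b‖, le_abs_self (⟪a, b⟫ * ⟪v, w⟫)]

end

/-- There is a dimension-independent constant `c > 0` such that for all `a, b ∈ ℝ^n` and unit
vectors `v₁, v₂ ∈ ℝ^d`, the Frobenius norm of the difference of the rank-one matrices satisfies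
`‖a ⊗ v₁ − b ⊗ v₂‖_F ≥ c · min(‖a‖,‖b‖) · min(‖v₁−v₂‖,‖v₁+v₂‖)`. -/
theorem rank_one_difference_lower_bound :
    ∃ c : ℝ, 0 < c ∧ ∀ (n d : ℕ) (a b : EuclideanSpace ℝ (Fin n))
      (v₁ v₂ : EuclideanSpace ℝ (Fin d)), ‖v₁‖ = 1 → ‖v₂‖ = 1 →
      c * min ‖a‖ ‖b‖ * min ‖v₁ - v₂‖ ‖v₁ + v₂‖ ≤
        Real.sqrt (∑ i, ∑ j, (a i * v₁ j - b i * v₂ j) ^ 2) := by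
  refine ⟨1, one_pos, fun n d a b v₁ v₂ h₁ h₂ => Real.le_sqrt_of_sq_le ?_⟩
  rw [EuclideanSpace.sum_sum_mul_sub_mul_sq, h₁, h₂, one_pow, mul_one, mul_one, one_mul]
  exact sq_min_norm_mul_min_norm_sub_norm_add_le a b h₁ h₂
end

section
/- Let i : [0, ∞) → [0, ∞) be nondecreasing with lim_{t→∞} i(t)/t = +∞. Define i'(t) := inf_{ρ ∈ (0, 1]} ρ⁻²(i(ρt) + 1). Then: (a) i' is nondecreasing; (b) i'(t) ≤ i(t) + 1 for all t; (c) i'(2t) ≤ 4 i'(t) for all t ≥ 0 (doubling); (d) lim_{t→∞} i'(t)/t = +∞. -/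
open Filter Topology

/-!
Every value `ρ⁻²(i(ρt)+1)` with `ρ ∈ (0,1]` taken at `λt`, `λ ≥ 1`, is `λ²` times a value taken at
`t` (substitute `ρ/λ` for `ρ`), which gives doubling. Superlinearity survives: if `i(s) ≥ M s` for
`s ≥ T`, a value with `ρt ≥ T` is at least `ρ⁻¹ M t ≥ M t`, and one with `ρt < T` is at least
`ρ⁻² > t²/T²`.
-/

noncomputable def doublingRegularization (i : ℝ → ℝ) (t : ℝ) : ℝ :=
  sInf {x : ℝ | ∃ ρ : ℝ, 0 < ρ ∧ ρ ≤ 1 ∧ x = (ρ ^ 2)⁻¹ * (i (ρ * t) + 1)}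

section DoublingRegularization

variable {i : ℝ → ℝ}

theorem le_doublingRegularization {c t : ℝ}
    (h : ∀ ρ : ℝ, 0 < ρ → ρ ≤ 1 → c ≤ (ρ ^ 2)⁻¹ * (i (ρ * t) + 1)) :
    c ≤ doublingRegularization i t :=
  le_csInf ⟨_, 1, one_pos, le_rfl, rfl⟩ fun _ ⟨ρ, hρ0, hρ1, hx⟩ => hx ▸ h ρ hρ0 hρ1

theorem doublingRegularization_le (hnonneg : ∀ t : ℝ, 0 ≤ t → 0 ≤ i t) {t ρ : ℝ} (ht : 0 ≤ t)
    (hρ0 : 0 < ρ) (hρ1 : ρ ≤ 1) :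
    doublingRegularization i t ≤ (ρ ^ 2)⁻¹ * (i (ρ * t) + 1) := by
  refine csInf_le ⟨0, ?_⟩ ⟨ρ, hρ0, hρ1, rfl⟩
  rintro _ ⟨σ, hσ0, -, rfl⟩
  have := hnonneg (σ * t) (by positivity)
  positivity

theorem doublingRegularization_le_add_one (hnonneg : ∀ t : ℝ, 0 ≤ t → 0 ≤ i t) {t : ℝ}
    (ht : 0 ≤ t) : doublingRegularization i t ≤ i t + 1 := by
  simpa using doublingRegularization_le hnonneg ht one_pos le_rfl

theorem doublingRegularization_mono (hmono : ∀ s t : ℝ, 0 ≤ s → s ≤ t → i s ≤ i t)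
    (hnonneg : ∀ t : ℝ, 0 ≤ t → 0 ≤ i t) {s t : ℝ} (hs : 0 ≤ s) (hst : s ≤ t) :
    doublingRegularization i s ≤ doublingRegularization i t :=
  le_doublingRegularization fun ρ hρ0 hρ1 =>
    (doublingRegularization_le hnonneg hs hρ0 hρ1).trans <| by
      gcongr
      exact hmono _ _ (by positivity) (by gcongr)

theorem doublingRegularization_mul_le (hnonneg : ∀ t : ℝ, 0 ≤ t → 0 ≤ i t) {t l : ℝ}
    (ht : 0 ≤ t) (hl : 1 ≤ l) :
    doublingRegularization i (l * t) ≤ l ^ 2 * doublingRegularization i t := by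
  have hl0 : 0 < l := one_pos.trans_le hl
  rw [← div_le_iff₀' (by positivity)]
  refine le_doublingRegularization fun ρ hρ0 hρ1 => ?_
  have hσ1 : ρ / l ≤ 1 := (div_le_one hl0).2 (hρ1.trans hl)
  calc doublingRegularization i (l * t) / l ^ 2
      ≤ ((ρ / l) ^ 2)⁻¹ * (i (ρ / l * (l * t)) + 1) / l ^ 2 := by
        gcongr
        exact doublingRegularization_le hnonneg (by positivity) (by positivity) hσ1
    _ = (ρ ^ 2)⁻¹ * (i (ρ * t) + 1) := by
        rw [show ρ / l * (l * t) = ρ * t by field_simp]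
        field_simp

theorem mul_le_doublingRegularization (hnonneg : ∀ t : ℝ, 0 ≤ t → 0 ≤ i t) {M T t : ℝ}
    (hM : 0 ≤ M) (hT : ∀ s, T ≤ s → M * s ≤ i s) (ht0 : 0 < t) (ht : M * T ^ 2 ≤ t) :
    M * t ≤ doublingRegularization i t := by
  refine le_doublingRegularization fun ρ hρ0 hρ1 => ?_
  rw [le_inv_mul_iff₀ (by positivity)]
  have hi := hnonneg (ρ * t) (by positivity)
  rcases le_or_gt T (ρ * t) with hlarge | hsmall
  · calc ρ ^ 2 * (M * t) ≤ ρ * (M * t) := by gcongr; nlinarith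
      _ = M * (ρ * t) := by ring
      _ ≤ i (ρ * t) + 1 := by linarith [hT _ hlarge]
  · -- `ρ² (M t) t = M (ρt)² ≤ M T² ≤ t`
    have hsq : (ρ * t) ^ 2 ≤ T ^ 2 := pow_le_pow_left₀ (by positivity) hsmall.le 2
    have : ρ ^ 2 * (M * t) * t ≤ 1 * t := by nlinarith
    linarith [le_of_mul_le_mul_right this ht0]

end DoublingRegularization

theorem tendsto_div_self_atTop_iff {f : ℝ → ℝ} :
    Tendsto (fun t => f t / t) atTop atTop ↔ ∀ M : ℝ, ∀ᶠ t in atTop, M * t ≤ f t := by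
  refine tendsto_atTop.trans <| forall_congr' fun M => eventually_congr ?_
  filter_upwards [eventually_gt_atTop 0] with t ht
  exact le_div_iff₀ ht

theorem tendsto_doublingRegularization_div_atTop {i : ℝ → ℝ}
    (hnonneg : ∀ t : ℝ, 0 ≤ t → 0 ≤ i t) (hsup : Tendsto (fun t => i t / t) atTop atTop) :
    Tendsto (fun t => doublingRegularization i t / t) atTop atTop := by
  refine tendsto_div_self_atTop_iff.2 fun M => ?_
  obtain ⟨T, hT⟩ := eventually_atTop.1 (tendsto_div_self_atTop_iff.1 hsup (max M 0))
  filter_upwards [eventually_gt_atTop 0, eventually_ge_atTop (max M 0 * max T 0 ^ 2)]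
    with t ht0 ht
  calc M * t ≤ max M 0 * t := by gcongr; exact le_max_left _ _
    _ ≤ doublingRegularization i t :=
      mul_le_doublingRegularization hnonneg (le_max_right _ _)
        (fun s hs => hT s ((le_max_left _ _).trans hs)) ht0 ht

/-- De La Vallée Poussin integrand with doubling: if `i : [0,∞) → [0,∞)` is nondecreasing with
`i(t)/t → ∞`, then `i'(t) := inf_{ρ∈(0,1]} ρ⁻²(i(ρt)+1)` is nondecreasing, satisfies
`i'(t) ≤ i(t)+1`, doubles as `i'(2t) ≤ 4 i'(t)`, and is still superlinear. -/
theorem de_la_vallee_poussin_doubling (i : ℝ → ℝ)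
    (hmono : ∀ s t : ℝ, 0 ≤ s → s ≤ t → i s ≤ i t)
    (hnonneg : ∀ t : ℝ, 0 ≤ t → 0 ≤ i t)
    (hsup : Tendsto (fun t : ℝ => i t / t) atTop atTop) :
    let i' : ℝ → ℝ := fun t =>
      sInf {x : ℝ | ∃ ρ : ℝ, 0 < ρ ∧ ρ ≤ 1 ∧ x = (ρ ^ 2)⁻¹ * (i (ρ * t) + 1)}
    (∀ s t : ℝ, 0 ≤ s → s ≤ t → i' s ≤ i' t) ∧
    (∀ t : ℝ, 0 ≤ t → i' t ≤ i t + 1) ∧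
    (∀ t : ℝ, 0 ≤ t → i' (2 * t) ≤ 4 * i' t) ∧
    Tendsto (fun t : ℝ => i' t / t) atTop atTop :=
  ⟨fun _ _ hs hst => doublingRegularization_mono hmono hnonneg hs hst,
    fun _ ht => doublingRegularization_le_add_one hnonneg ht,
    fun _ ht => (doublingRegularization_mul_le hnonneg ht one_le_two).trans_eq <| by
      norm_num [doublingRegularization],
    tendsto_doublingRegularization_div_atTop hnonneg hsup⟩
end
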